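/- arXiv:2007.10094 — 7 statements merged into one kernel-verified Lean document; each statement's English description precedes it below -/
import Mathlib

section
/- Let G be a finite abelian group, and let U_1, …, U_r, V_1, …, V_s be minimal zero-sum sequences over a subset G_0 ⊆ G with U_1 ⋯ U_r = V_1 ⋯ V_s (product in the free abelian monoid on G_0). If G_0 ⊆ {−g, g} for an element g of order n, then n − 2 divides s − r. -/
def IsMinZeroSum {G : Type*} [AddCommGroup G] (S : Multiset G) : Prop :=
  S ≠ 0 ∧ S.sum = 0 ∧ ∀ T : Multiset G, T ≤ S → T ≠ 0 → T ≠ S → T.sum ≠ 0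

/-! For `g ≠ -g` of order `n`, the atoms over `{g, -g}` are `gⁿ`, `(-g)ⁿ` and `g (-g)`. The
additive weight `(n - 1) v_g + v_{-g}` takes the value `n` on each of them modulo `n (n - 2)`, so
a factorization of length `ℓ` has weight `≡ n ℓ`, and two factorizations of the same sequence
have lengths congruent modulo `n - 2`. When `g = -g` the only atom is `gⁿ` and `v_g` does the
same job. -/

theorem card_modEq_of_sum_eq {M ι κ : Type*} [AddCommMonoid M] [Fintype ι] [Fintype κ]
    (w : M →+ ℤ) {c m : ℤ} (hc : c ≠ 0) {U : ι → M} {V : κ → M}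
    (hU : ∀ i, w (U i) ≡ c [ZMOD c * m]) (hV : ∀ j, w (V j) ≡ c [ZMOD c * m])
    (h : ∑ i, U i = ∑ j, V j) :
    (Fintype.card ι : ℤ) ≡ Fintype.card κ [ZMOD m] := by
  refine Int.ModEq.mul_left_cancel' hc ?_
  calc c * Fintype.card ι = ∑ _i : ι, c := by simp [mul_comm]
    _ ≡ ∑ i, w (U i) [ZMOD c * m] := Int.ModEq.sum fun i _ => (hU i).symm
    _ = ∑ j, w (V j) := by rw [← map_sum, h, map_sum]
    _ ≡ ∑ _j : κ, c [ZMOD c * m] := Int.ModEq.sum fun j _ => hV j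
    _ = c * Fintype.card κ := by simp [mul_comm]

namespace IsMinZeroSum

variable {G : Type*} [AddCommGroup G] {S T : Multiset G} {g : G}

theorem eq_of_le (hS : IsMinZeroSum S) (hTS : T ≤ S) (hT : T ≠ 0) (hT0 : T.sum = 0) : T = S :=
  by_contra fun h => hS.2.2 T hTS hT h hT0

theorem eq_addOrderOf_of_replicate {a : ℕ} (hS : IsMinZeroSum (Multiset.replicate a g)) :
    a = addOrderOf g := by
  have ha : a ≠ 0 := by rintro rfl; exact hS.1 rfl
  have hdvd : addOrderOf g ∣ a :=
    addOrderOf_dvd_of_nsmul_eq_zero (by simpa using hS.2.1)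
  have hord : addOrderOf g ≠ 0 := by rintro h; exact ha (Nat.eq_zero_of_zero_dvd (h ▸ hdvd))
  have hle : Multiset.replicate (addOrderOf g) g ≤ Multiset.replicate a g :=
    Multiset.replicate_le_replicate g |>.2 (Nat.le_of_dvd (Nat.pos_of_ne_zero ha) hdvd)
  have hne : Multiset.replicate (addOrderOf g) g ≠ 0 :=
    mt (congrArg Multiset.card) (by rwa [Multiset.card_replicate, Multiset.card_zero])
  have := hS.eq_of_le hle hne (by simp)
  exact (Multiset.replicate_left_injective g this).symm

theorem eq_replicate_addOrderOf (hS : IsMinZeroSum S) (hmem : ∀ x ∈ S, x = g) :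
    S = Multiset.replicate (addOrderOf g) g := by
  rw [← Multiset.eq_replicate_card] at hmem
  rw [hmem] at hS ⊢
  rw [hS.eq_addOrderOf_of_replicate]

theorem eq_replicate_or_eq_pair (hg : g ≠ -g) (hS : IsMinZeroSum S)
    (hmem : ∀ x ∈ S, x = -g ∨ x = g) :
    S = Multiset.replicate (addOrderOf g) g ∨ S = Multiset.replicate (addOrderOf g) (-g) ∨
      S = {g, -g} := by
  by_cases hgS : g ∈ S
  · by_cases hngS : -g ∈ S
    · refine Or.inr (Or.inr (hS.eq_of_le ?_ (by simp) (by simp)).symm)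
      refine (Multiset.le_iff_subset (by simp [hg])).2 ?_
      simp [Multiset.insert_eq_cons, Multiset.cons_subset, hgS, hngS]
    · exact Or.inl <| hS.eq_replicate_addOrderOf fun x hx =>
        (hmem x hx).resolve_left fun h => hngS (h ▸ hx)
  · refine Or.inr (Or.inl ?_)
    rw [← addOrderOf_neg]
    exact hS.eq_replicate_addOrderOf fun x hx =>
      (hmem x hx).resolve_right fun h => hgS (h ▸ hx)

variable [DecidableEq G] in
theorem weight_modEq (hg : g ≠ -g) (hS : IsMinZeroSum S)
    (hmem : ∀ x ∈ S, x = -g ∨ x = g) :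
    ((addOrderOf g : ℤ) - 1) * S.count g + S.count (-g) ≡
      addOrderOf g [ZMOD addOrderOf g * (addOrderOf g - 2)] := by
  rcases hS.eq_replicate_or_eq_pair hg hmem with rfl | rfl | rfl
  · refine (Int.modEq_iff_dvd.2 ⟨1, ?_⟩).symm
    simp [Multiset.count_replicate, hg]
    ring
  · simp [Multiset.count_replicate, hg.symm]
  · simp [hg, hg.symm]

end IsMinZeroSum

theorem stmt_1 {G : Type*} [AddCommGroup G] [Fintype G] (G₀ : Set G) (g : G) (n : ℕ)
    (hg : addOrderOf g = n) (hG₀ : G₀ ⊆ {-g, g})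
    (r s : ℕ) (U : Fin r → Multiset G) (V : Fin s → Multiset G)
    (hU : ∀ i, IsMinZeroSum (U i) ∧ ∀ x ∈ U i, x ∈ G₀)
    (hV : ∀ j, IsMinZeroSum (V j) ∧ ∀ x ∈ V j, x ∈ G₀)
    (heq : (∑ i, U i) = (∑ j, V j)) :
    ((n : ℤ) - 2) ∣ ((s : ℤ) - (r : ℤ)) := by
  classical
  subst hg
  have hn : (addOrderOf g : ℤ) ≠ 0 := by exact_mod_cast (addOrderOf_pos g).ne'
  have hmem {S : Multiset G} (hS : ∀ x ∈ S, x ∈ G₀) : ∀ x ∈ S, x = -g ∨ x = g :=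
    fun x hx => hG₀ (hS x hx)
  let count (x : G) : Multiset G →+ ℤ :=
    (Nat.castAddMonoidHom ℤ).comp (Multiset.countAddMonoidHom x)
  obtain ⟨w, hw⟩ : ∃ w : Multiset G →+ ℤ, ∀ S, IsMinZeroSum S → (∀ x ∈ S, x ∈ G₀) →
      w S ≡ addOrderOf g [ZMOD addOrderOf g * (addOrderOf g - 2)] := by
    by_cases hgg : g = -g
    · refine ⟨count g, fun S hS hS₀ => ?_⟩
      have hrep := hS.eq_replicate_addOrderOf fun x hx =>
        (hmem hS₀ x hx).elim (·.trans hgg.symm) id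
      simp [count, hrep]
    · exact ⟨((addOrderOf g : ℤ) - 1) • count g + count (-g),
        fun S hS hS₀ => hS.weight_modEq hgg (hmem hS₀)⟩
  simpa using (card_modEq_of_sum_eq w hn (fun i => hw _ (hU i).1 (hU i).2)
    (fun j => hw _ (hV j).1 (hV j).2) heq).dvd
end

section
/- Let G be an elementary 2-group of rank r ≥ 2, i.e., G ≅ C_2^r. Then D(G) = r + 1, and for any minimal zero-sum sequences U_1, …, U_k, V_1, …, V_m over G all of whose terms lie in the support of some fixed minimal zero-sum sequence U of length r+1, the equality U_1 ⋯ U_k = V_1 ⋯ V_m implies that r − 1 divides m − k. -/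
noncomputable def Dav (G : Type*) [AddCommGroup G] [Fintype G] : ℕ :=
  sSup {n : ℕ | ∃ S : Multiset G, IsMinZeroSum S ∧ Multiset.card S = n}

open Multiset Module Finset

section MinZeroSum

variable {G : Type*} [AddCommGroup G]

theorem IsMinZeroSum.eq_of_le_s2 {S T : Multiset G} (hS : IsMinZeroSum S) (hTS : T ≤ S)
    (hT : T ≠ 0) (hT0 : T.sum = 0) : T = S := by
  by_contra hne
  exact hS.2.2 T hTS hT hne hT0

theorem isMinZeroSum_val_iff {s : Finset G} :
    IsMinZeroSum s.val ↔
      s.Nonempty ∧ ∑ x ∈ s, x = 0 ∧ ∀ C ⊆ s, C.Nonempty → ∑ x ∈ C, x = 0 → C = s := by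
  simp only [IsMinZeroSum, Finset.sum_val, ne_eq, Finset.val_eq_zero,
    ← Finset.not_nonempty_iff_eq_empty, not_not]
  constructor
  · rintro ⟨hs0, hsum, hmin⟩
    refine ⟨hs0, hsum, fun C hC hC0 hCsum => Finset.val_inj.1 ?_⟩
    by_contra hne
    exact hmin C.val (Finset.val_le_iff.2 hC) (by simpa using hC0.ne_empty) hne
      (by simpa using hCsum)
  · rintro ⟨hs0, hsum, hmin⟩
    refine ⟨hs0, hsum, fun T hTs hT hTne hT0 => hTne ?_⟩
    let C : Finset G := ⟨T, nodup_of_le hTs s.nodup⟩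
    exact congrArg Finset.val
      (hmin C (Finset.val_le_iff.1 hTs) (by simpa [C] using hT) (by simpa [C] using hT0))

theorem IsMinZeroSum.nodup_or_eq_replicate_two (hG : ∀ g : G, g + g = 0) {S : Multiset G}
    (hS : IsMinZeroSum S) : S.Nodup ∨ ∃ g, S = replicate 2 g := by
  rw [or_iff_not_imp_left, nodup_iff_le]
  push Not
  rintro ⟨g, hg⟩
  exact ⟨g, (hS.eq_of_le_s2 hg cons_ne_zero (by simp [hG])).symm⟩

theorem IsMinZeroSum.nodup (hG : ∀ g : G, g + g = 0) {S : Multiset G} (hS : IsMinZeroSum S)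
    (h3 : 3 ≤ card S) : S.Nodup :=
  (hS.nodup_or_eq_replicate_two hG).resolve_right fun ⟨g, hg⟩ => by simp [hg] at h3

theorem IsMinZeroSum.eq_replicate_two_or_eq (hG : ∀ g : G, g + g = 0) {U W : Multiset G}
    (hU : IsMinZeroSum U) (hW : IsMinZeroSum W) (hWU : ∀ x ∈ W, x ∈ U) :
    (∃ g ∈ U, W = replicate 2 g) ∨ W = U := by
  rcases hW.nodup_or_eq_replicate_two hG with hnd | ⟨g, rfl⟩
  · exact Or.inr (hU.eq_of_le_s2 ((le_iff_subset hnd).2 hWU) hW.1 hW.2.1)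
  · exact Or.inl ⟨g, hWU g (by simp), rfl⟩

theorem IsMinZeroSum.card_sum_of_forall_mem (hG : ∀ g : G, g + g = 0) {U : Multiset G}
    (hU : IsMinZeroSum U) {ι : Type*} [Fintype ι] [DecidableEq G] {Ws : ι → Multiset G}
    (hWs : ∀ i, IsMinZeroSum (Ws i) ∧ ∀ x ∈ Ws i, x ∈ U) :
    (card (∑ i, Ws i) : ℤ) = 2 * Fintype.card ι + (card U - 2) * #{i | Ws i = U} := by
  have hcard : ∀ i, (card (Ws i) : ℤ) = 2 + (card U - 2) * if Ws i = U then 1 else 0 := by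
    intro i
    rcases hU.eq_replicate_two_or_eq hG (hWs i).1 (hWs i).2 with ⟨g, -, hg⟩ | hi
    · by_cases hi : Ws i = U <;> simp_all
    · simp [hi]
  simp only [card_sum, Nat.cast_sum, hcard, Finset.sum_add_distrib, ← Finset.mul_sum,
    Finset.sum_boole]
  simp [mul_comm]

theorem IsMinZeroSum.count_sum_of_forall_mem (hG : ∀ g : G, g + g = 0) {U : Multiset G}
    (hU : IsMinZeroSum U) (hnd : U.Nodup) {g₀ : G} (hg₀ : g₀ ∈ U) {ι : Type*} [Fintype ι]
    [DecidableEq G] {Ws : ι → Multiset G} (hWs : ∀ i, IsMinZeroSum (Ws i) ∧ ∀ x ∈ Ws i, x ∈ U) :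
    (count g₀ (∑ i, Ws i) : ZMod 2) = #{i | Ws i = U} := by
  have hcount : ∀ i, (count g₀ (Ws i) : ZMod 2) = if Ws i = U then 1 else 0 := by
    intro i
    rcases hU.eq_replicate_two_or_eq hG (hWs i).1 (hWs i).2 with ⟨g, -, hg⟩ | hi
    · by_cases hi : Ws i = U
      · simp [hi, count_eq_one_of_mem hnd hg₀]
      · rw [if_neg hi, hg, count_replicate]
        split_ifs <;> rfl
    · simp [hi, count_eq_one_of_mem hnd hg₀]
  simp only [count_sum', Nat.cast_sum, hcount, Finset.sum_boole]

theorem IsMinZeroSum.card_sub_two_dvd_of_sum_eq (hG : ∀ g : G, g + g = 0) {U : Multiset G}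
    (hU : IsMinZeroSum U) (hnd : U.Nodup) {ι κ : Type*} [Fintype ι] [Fintype κ]
    {Us : ι → Multiset G} {Vs : κ → Multiset G}
    (hUs : ∀ i, IsMinZeroSum (Us i) ∧ ∀ x ∈ Us i, x ∈ U)
    (hVs : ∀ j, IsMinZeroSum (Vs j) ∧ ∀ x ∈ Vs j, x ∈ U) (h : ∑ i, Us i = ∑ j, Vs j) :
    ((card U : ℤ) - 2) ∣ (Fintype.card κ : ℤ) - Fintype.card ι := by
  classical
  obtain ⟨g₀, hg₀⟩ := exists_mem_of_ne_zero hU.1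
  have hcard := hU.card_sum_of_forall_mem hG hUs
  have hcount := hU.count_sum_of_forall_mem hG hnd hg₀ hUs
  rw [h, hU.card_sum_of_forall_mem hG hVs] at hcard
  rw [h, hU.count_sum_of_forall_mem hG hnd hg₀ hVs, ZMod.natCast_eq_natCast_iff'] at hcount
  obtain ⟨t, ht⟩ : (2 : ℤ) ∣ #{i | Us i = U} - #{j | Vs j = U} := by omega
  refine ⟨t, mul_left_cancel₀ two_ne_zero ?_⟩
  linear_combination hcard + (card U - 2 : ℤ) * ht

end MinZeroSum

section ZModTwoModule

variable {M : Type*} [AddCommGroup M] [Module (ZMod 2) M]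

theorem ZModModule.linearIndependent_iff_forall_sum_eq_zero {ι : Type*} {v : ι → M} :
    LinearIndependent (ZMod 2) v ↔ ∀ s : Finset ι, ∑ i ∈ s, v i = 0 → s = ∅ := by
  rw [linearIndependent_iff']
  constructor
  · intro h s hs
    by_contra hne
    obtain ⟨i, hi⟩ := Finset.nonempty_iff_ne_empty.2 hne
    exact one_ne_zero (h s 1 (by simpa using hs) i hi)
  · intro h s c hc i hi
    have hsmul : ∀ j, c j • v j = if c j ≠ 0 then v j else 0 := by
      intro j
      rcases (by decide : ∀ a : ZMod 2, a = 0 ∨ a = 1) (c j) with h0 | h1 <;> simp [*]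
    have hsupp := h {j ∈ s | c j ≠ 0} <|
      (Finset.sum_filter _ _).trans ((Finset.sum_congr rfl fun j _ => (hsmul j).symm).trans hc)
    by_contra hci
    exact Finset.filter_eq_empty_iff.1 hsupp hi hci

theorem IsMinZeroSum.linearIndependent_erase [DecidableEq M] {s : Finset M}
    (hs : IsMinZeroSum s.val) {s₀ : M} (hs₀ : s₀ ∈ s) :
    LinearIndependent (ZMod 2) ((↑) : s.erase s₀ → M) := by
  rw [ZModModule.linearIndependent_iff_forall_sum_eq_zero]
  intro C hC
  by_contra hne
  set C' := C.map (Function.Embedding.subtype _)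
  have hC's : C' = s :=
    (isMinZeroSum_val_iff.1 hs).2.2 C' (fun x hx => by
        obtain ⟨y, -, rfl⟩ := Finset.mem_map.1 hx
        exact Finset.mem_of_mem_erase y.2)
      (by simpa [C', Finset.nonempty_iff_ne_empty] using hne) (by simpa [C'] using hC)
  rw [← hC's] at hs₀
  obtain ⟨y, -, hy⟩ := Finset.mem_map.1 hs₀
  exact (Finset.mem_erase.1 y.2).1 hy

theorem IsMinZeroSum.card_le_finrank_add_one [Module.Finite (ZMod 2) M] {S : Multiset M}
    (hS : IsMinZeroSum S) (hM : 1 ≤ finrank (ZMod 2) M) : card S ≤ finrank (ZMod 2) M + 1 := by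
  classical
  rcases hS.nodup_or_eq_replicate_two ZModModule.add_self with hnd | ⟨g, rfl⟩
  · obtain ⟨s₀, hs₀⟩ := exists_mem_of_ne_zero hS.1
    have := (IsMinZeroSum.linearIndependent_erase (s := ⟨S, hnd⟩) hS hs₀).finset_card_le_finrank
    rw [Finset.card_erase_of_mem hs₀] at this
    simp only [Finset.card_mk] at this
    omega
  · simpa using hM

theorem LinearIndependent.sum_ne_apply {ι : Type*} [Fintype ι] [Nontrivial ι] {e : ι → M}
    (he : LinearIndependent (ZMod 2) e) (i : ι) : ∑ j, e j ≠ e i := by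
  classical
  intro hi
  obtain ⟨j, hj⟩ := exists_ne i
  have hrest : ∑ k ∈ univ.erase i, e k = 0 := by
    refine (add_eq_right (b := e i)).1 ?_
    rw [Finset.sum_erase_add _ _ (mem_univ i)]
    exact hi
  have := ZModModule.linearIndependent_iff_forall_sum_eq_zero.1 he _ hrest
  exact Finset.notMem_empty j (this ▸ Finset.mem_erase.2 ⟨hj, mem_univ j⟩)

theorem LinearIndependent.isMinZeroSum_sum_cons {ι : Type*} [Fintype ι] [Nontrivial ι]
    {e : ι → M} (he : LinearIndependent (ZMod 2) e) :
    IsMinZeroSum ((∑ i, e i) ::ₘ univ.val.map e) := by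
  classical
  set f := ∑ i, e i
  have hf : f ∉ univ.map ⟨e, he.injective⟩ := fun hmem => by
    obtain ⟨i, -, hi⟩ := Finset.mem_map.1 hmem
    exact he.sum_ne_apply i hi.symm
  set s := (univ.map ⟨e, he.injective⟩).cons f hf
  have hsum : ∀ C ⊆ s, ∑ x ∈ C, x =
      ∑ i, ((if f ∈ C then 1 else 0) + (if e i ∈ C then 1 else 0) : ZMod 2) • e i := by
    intro C hC
    rw [← Finset.inter_eq_right.2 hC, ← Finset.sum_ite_mem, Finset.sum_cons, Finset.sum_map]
    simp [s, add_smul, Finset.sum_add_distrib, ite_smul, f]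
  have hcoef : ∀ C ⊆ s, ∑ x ∈ C, x = 0 → ∀ i, e i ∈ C ↔ f ∈ C := by
    intro C hC hC0 i
    have hi := Fintype.linearIndependent_iff.1 he _ ((hsum C hC).symm.trans hC0) i
    by_cases h1 : f ∈ C <;> by_cases h2 : e i ∈ C <;> simp [h1, h2] at hi ⊢
  refine isMinZeroSum_val_iff (s := s).2
    ⟨⟨f, Finset.mem_cons_self f _⟩, ?_, fun C hC hCne hC0 => ?_⟩
  · rw [Finset.sum_cons, Finset.sum_map]
    exact ZModModule.add_self f
  by_cases hfC : f ∈ C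
  · refine Finset.Subset.antisymm hC fun x hx => ?_
    rcases Finset.mem_cons.1 hx with rfl | hx
    · exact hfC
    · obtain ⟨i, -, rfl⟩ := Finset.mem_map.1 hx
      exact (hcoef C hC hC0 i).2 hfC
  · obtain ⟨x, hx⟩ := hCne
    rcases Finset.mem_cons.1 (hC hx) with rfl | hx'
    · exact absurd hx hfC
    · obtain ⟨i, -, rfl⟩ := Finset.mem_map.1 hx'
      exact absurd ((hcoef C hC hC0 i).1 hx) hfC

theorem dav_eq_finrank_add_one [Fintype M] (hM : 2 ≤ finrank (ZMod 2) M) :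
    Dav M = finrank (ZMod 2) M + 1 := by
  refine IsGreatest.csSup_eq ⟨?_, ?_⟩
  · have : Nontrivial (Fin (finrank (ZMod 2) M)) := Fin.nontrivial_iff_two_le.2 hM
    exact ⟨_, (Module.finBasis (ZMod 2) M).linearIndependent.isMinZeroSum_sum_cons, by simp⟩
  · rintro _ ⟨S, hS, rfl⟩
    exact hS.card_le_finrank_add_one (by omega)

end ZModTwoModule

theorem stmt_2 (r : ℕ) (hr : 2 ≤ r) :
    Dav (Fin r → ZMod 2) = r + 1 ∧
    ∀ U : Multiset (Fin r → ZMod 2), IsMinZeroSum U → Multiset.card U = r + 1 →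
    ∀ (k m : ℕ) (Us : Fin k → Multiset (Fin r → ZMod 2))
      (Vs : Fin m → Multiset (Fin r → ZMod 2)),
      (∀ i, IsMinZeroSum (Us i) ∧ ∀ x ∈ Us i, x ∈ U) →
      (∀ j, IsMinZeroSum (Vs j) ∧ ∀ x ∈ Vs j, x ∈ U) →
      (∑ i, Us i) = (∑ j, Vs j) →
      ((r : ℤ) - 1) ∣ ((m : ℤ) - (k : ℤ)) := by
  have hrank : finrank (ZMod 2) (Fin r → ZMod 2) = r := finrank_fin_fun _
  refine ⟨by rw [dav_eq_finrank_add_one (hrank.symm ▸ hr), hrank], ?_⟩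
  intro U hU hcard k m Us Vs hUs hVs hsum
  have hdvd := hU.card_sub_two_dvd_of_sum_eq ZModModule.add_self
    (hU.nodup ZModModule.add_self (by omega)) hUs hVs hsum
  rwa [hcard, Fintype.card_fin, Fintype.card_fin, Nat.cast_add, Nat.cast_one,
    show (r : ℤ) + 1 - 2 = r - 1 by ring] at hdvd
end

section
/- Let G ≅ C_{p^{s_1}}^{r_1} ⊕ C_{p^{s_2}}^{r_2} where p is a prime and r_1, r_2, s_1, s_2 ∈ ℕ with s_1 < s_2, and let G_0 ⊆ G be a subset generating G. Then there exists a subset G_0' ⊆ G_0 of cardinality r_2 that is an independent family of elements each of order p^{s_2}; in particular ⟨G_0'⟩ ≅ C_{p^{s_2}}^{r_2}. -/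
def IndepSet {G : Type*} [AddCommGroup G] (s : Finset G) : Prop :=
  (∀ g ∈ s, g ≠ (0 : G)) ∧
  ∀ f : G → ℤ, (∑ g ∈ s, f g • g) = 0 → ∀ g ∈ s, f g • g = 0

/-!
Reducing the second coordinate modulo `p` maps `G = C_{p^s₁}^r₁ ⊕ C_{p^s₂}^r₂` onto `𝔽_p ^ r₂`,
and the image of `G₀` spans it, so some `r₂` elements of `G₀` have linearly independent images.
For such a family `T`, the elements `p ^ (s₂ - 1) • t` are independent modulo `p`, because
`p ^ (s₂ - 1) • x = 0` forces the reduction of `x` to vanish. Since `p ^ s₂` kills `G`, peeling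
off one factor of `p` at a time from a relation `∑ f t • t = 0` shows `p ^ s₂ ∣ f t`, i.e. `T` is
independent, and each `t ∈ T` has order `p ^ s₂`.
-/

open Module

theorem exists_finset_subset_card_eq_finrank_linearIndepOn {A K V : Type*} [AddCommGroup A]
    [DivisionRing K] [AddCommGroup V] [Module K V] [FiniteDimensional K V]
    (π : A →+ V) (hπ : Function.Surjective π) {G₀ : Set A}
    (hgen : AddSubgroup.closure G₀ = ⊤) :
    ∃ T : Finset A, ↑T ⊆ G₀ ∧ T.card = finrank K V ∧ LinearIndepOn K π (T : Set A) := by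
  obtain ⟨b, hbG₀, -, hG₀b, hli⟩ :=
    exists_linearIndepOn_extension (linearIndepOn_empty K π) (Set.empty_subset G₀)
  have : Finite b := hli.finite
  have hspan : Submodule.span K (π '' b) = ⊤ := by
    refine eq_top_iff.mpr fun v _ ↦ ?_
    obtain ⟨a, rfl⟩ := hπ v
    have hle : AddSubgroup.closure G₀ ≤ (Submodule.span K (π '' b)).toAddSubgroup.comap π :=
      (AddSubgroup.closure_le _).mpr fun x hx ↦ hG₀b ⟨x, hx, rfl⟩
    exact hle (hgen ▸ AddSubgroup.mem_top a)
  refine ⟨b.toFinite.toFinset, by simpa using hbG₀, ?_, by simpa using hli⟩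
  have := Fintype.ofFinite b
  rw [Set.toFinite_toFinset, Set.toFinset_card, ← finrank_span_eq_card hli, ← finrank_top K V,
    ← hspan, Set.image_eq_range]

theorem ZMod.nsmul_eq_zero_of_dvd {n m : ℕ} (h : n ∣ m) (x : ZMod n) : m • x = 0 := by
  rw [nsmul_eq_mul, (ZMod.natCast_eq_zero_iff m n).mpr h, zero_mul]

theorem ZMod.castHom_eq_zero_of_pow_nsmul_eq_zero {p k : ℕ} (hp : p ≠ 0)
    {y : ZMod (p ^ (k + 1))} (h : p ^ k • y = 0) :
    ZMod.castHom (dvd_pow_self p k.add_one_ne_zero) (ZMod p) y = 0 := by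
  obtain ⟨y, rfl⟩ := ZMod.intCast_surjective y
  rw [nsmul_eq_mul, ← Int.cast_natCast, ← Int.cast_mul, ZMod.intCast_zmod_eq_zero_iff_dvd] at h
  rw [map_intCast, ZMod.intCast_zmod_eq_zero_iff_dvd]
  push_cast [pow_succ] at h
  exact Int.dvd_of_mul_dvd_mul_left (pow_ne_zero _ (by exact_mod_cast hp)) h

section PowNSMulIndepMod

variable {A : Type*} [AddCommGroup A] {p k : ℕ} {T : Finset A}

def PowNSMulIndepMod (p k : ℕ) (T : Finset A) : Prop :=
  ∀ c : A → ℤ, ∑ t ∈ T, c t • (p ^ k • t) = 0 → ∀ t ∈ T, (p : ℤ) ∣ c t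

theorem LinearIndepOn.powNSMulIndepMod {V : Type*} [AddCommGroup V] [Module (ZMod p) V]
    (π : A →+ V) (hker : ∀ x, p ^ k • x = 0 → π x = 0)
    (hli : LinearIndepOn (ZMod p) π (T : Set A)) : PowNSMulIndepMod p k T := by
  intro c hc t ht
  have hsum : p ^ k • ∑ t ∈ T, c t • t = 0 := by
    simpa only [Finset.smul_sum, smul_comm (p ^ k)] using hc
  have hπsum : ∑ t ∈ T, (c t : ZMod p) • π t = 0 := by
    simpa only [map_sum, map_zsmul, Int.cast_smul_eq_zsmul] using hker _ hsum
  exact (ZMod.intCast_zmod_eq_zero_iff_dvd _ _).mp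
    (linearIndepOn_finset_iff.mp hli (fun t ↦ (c t : ZMod p)) hπsum t ht)

namespace PowNSMulIndepMod

theorem pow_succ_dvd (hT : PowNSMulIndepMod p k T) {f : A → ℤ} (hf : ∑ t ∈ T, f t • t = 0) :
    ∀ t ∈ T, (p : ℤ) ^ (k + 1) ∣ f t := by
  suffices ∀ j ≤ k + 1, ∀ t ∈ T, (p : ℤ) ^ j ∣ f t from this _ le_rfl
  intro j hj
  induction j with
  | zero => simp
  | succ j ih =>
    have hfq (t : A) (ht : t ∈ T) : f t = p ^ j * (f t / p ^ j) :=
      (Int.mul_ediv_cancel' (ih (by omega) t ht)).symm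
    have hpow : (p : ℤ) ^ k = p ^ (k - j) * p ^ j := by
      rw [← pow_add, Nat.sub_add_cancel (by omega)]
    have hq : ∑ t ∈ T, (f t / p ^ j) • (p ^ k • t) = 0 :=
      calc ∑ t ∈ T, (f t / p ^ j) • (p ^ k • t)
          = ∑ t ∈ T, p ^ (k - j) • (f t • t) := Finset.sum_congr rfl fun t ht ↦ by
            simp only [← natCast_zsmul, smul_smul]
            congr 1
            push_cast
            rw [hpow]
            nth_rw 2 [hfq t ht]
            ring
        _ = 0 := by rw [← Finset.smul_sum, hf, smul_zero]
    intro t ht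
    rw [hfq t ht, pow_succ]
    exact mul_dvd_mul_left _ (hT _ hq t ht)

theorem pow_nsmul_ne_zero (hp : p ≠ 1) (hT : PowNSMulIndepMod p k T) {t : A} (ht : t ∈ T) :
    p ^ k • t ≠ 0 := by
  classical
  intro h0
  have := hT (fun x ↦ if x = t then 1 else 0) (by simp [ht, h0]) t ht
  rw [if_pos rfl] at this
  exact hp (Nat.dvd_one.mp (Int.natCast_dvd_natCast.mp this))

theorem indepSet (hp : p ≠ 1) (hT : PowNSMulIndepMod p k T)
    (hexp : ∀ t ∈ T, p ^ (k + 1) • t = 0) : IndepSet T := by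
  refine ⟨fun t ht h0 ↦ hT.pow_nsmul_ne_zero hp ht (by rw [h0, smul_zero]), fun f hf t ht ↦ ?_⟩
  obtain ⟨m, hm⟩ := hT.pow_succ_dvd hf t ht
  rw [hm, mul_comm, mul_smul, ← Nat.cast_pow, natCast_zsmul, hexp t ht, smul_zero]

theorem addOrderOf_eq (hp : p.Prime) (hT : PowNSMulIndepMod p k T)
    (hexp : ∀ t ∈ T, p ^ (k + 1) • t = 0) {t : A} (ht : t ∈ T) :
    addOrderOf t = p ^ (k + 1) :=
  have := Fact.mk hp
  addOrderOf_eq_prime_pow (hT.pow_nsmul_ne_zero hp.ne_one ht) (hexp t ht)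

end PowNSMulIndepMod

end PowNSMulIndepMod

theorem stmt_4_general (p : ℕ) (hp : p.Prime) (r₁ r₂ s₁ s₂ : ℕ) (hs : s₁ < s₂)
    (G₀ : Set ((Fin r₁ → ZMod (p ^ s₁)) × (Fin r₂ → ZMod (p ^ s₂))))
    (hgen : AddSubgroup.closure G₀ = ⊤) :
    ∃ s : Finset ((Fin r₁ → ZMod (p ^ s₁)) × (Fin r₂ → ZMod (p ^ s₂))),
      ↑s ⊆ G₀ ∧ s.card = r₂ ∧ IndepSet s ∧ ∀ g ∈ s, addOrderOf g = p ^ s₂ := by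
  have := Fact.mk hp
  obtain ⟨k, rfl⟩ : ∃ k, s₂ = k + 1 := ⟨s₂ - 1, by omega⟩
  have hd : p ∣ p ^ (k + 1) := dvd_pow_self p k.add_one_ne_zero
  let π : (Fin r₁ → ZMod (p ^ s₁)) × (Fin r₂ → ZMod (p ^ (k + 1))) →+ (Fin r₂ → ZMod p) :=
    ((ZMod.castHom hd (ZMod p)).toAddMonoidHom.compLeft (Fin r₂)).comp (AddMonoidHom.snd _ _)
  have hπ : Function.Surjective π :=
    (ZMod.castHom_surjective hd).comp_left.comp Prod.snd_surjective
  have hker (x) (hx : p ^ k • x = 0) : π x = 0 := funext fun j ↦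
    ZMod.castHom_eq_zero_of_pow_nsmul_eq_zero hp.ne_zero (congrFun (congrArg Prod.snd hx) j)
  obtain ⟨T, hTG₀, hTcard, hli⟩ :=
    exists_finset_subset_card_eq_finrank_linearIndepOn (K := ZMod p) π hπ hgen
  have hexp : ∀ t ∈ T, p ^ (k + 1) • t = 0 := fun _ _ ↦ Prod.ext
    (funext fun _ ↦ ZMod.nsmul_eq_zero_of_dvd (pow_dvd_pow p hs.le) _)
    (funext fun _ ↦ ZMod.nsmul_eq_zero_of_dvd dvd_rfl _)
  have hT := hli.powNSMulIndepMod π hker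
  exact ⟨T, hTG₀, by simpa using hTcard, hT.indepSet hp.ne_one hexp,
    fun _ ht ↦ hT.addOrderOf_eq hp hexp ht⟩

theorem stmt_4 (p : ℕ) (hp : p.Prime) (r₁ r₂ s₁ s₂ : ℕ)
    (hr₁ : 0 < r₁) (hr₂ : 0 < r₂) (hs₁ : 0 < s₁) (hs : s₁ < s₂)
    (G₀ : Set ((Fin r₁ → ZMod (p ^ s₁)) × (Fin r₂ → ZMod (p ^ s₂))))
    (hgen : AddSubgroup.closure G₀ = ⊤) :
    ∃ s : Finset ((Fin r₁ → ZMod (p ^ s₁)) × (Fin r₂ → ZMod (p ^ s₂))),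
      ↑s ⊆ G₀ ∧ s.card = r₂ ∧ IndepSet s ∧ ∀ g ∈ s, addOrderOf g = p ^ s₂ :=
  stmt_4_general p hp r₁ r₂ s₁ s₂ hs G₀ hgen
end

section
/- Let G be a finite abelian group and let U be a minimal zero-sum sequence over G of length |U| = D(G). Then the support of U generates G. -/
lemma Multiset.le_or_exists_eq_cons_of_le_cons {α : Type*} {S T : Multiset α} {a : α}
    (h : T ≤ a ::ₘ S) : T ≤ S ∨ ∃ T' ≤ S, T = a ::ₘ T' := by
  classical
  by_cases ha : a ∈ T
  · exact Or.inr
      ⟨T.erase a, Multiset.erase_le_iff_le_cons.mpr h, (Multiset.cons_erase ha).symm⟩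
  · exact Or.inl ((Multiset.le_cons_of_notMem ha).mp h)

section

variable {G : Type*} [AddCommGroup G]

def IsZeroSumFree (S : Multiset G) : Prop :=
  ∀ T ≤ S, T ≠ 0 → T.sum ≠ 0

def subsums (S : Multiset G) : Set G :=
  {g | ∃ T ≤ S, T ≠ 0 ∧ T.sum = g}

namespace IsZeroSumFree

lemma mono {S S' : Multiset G} (h : IsZeroSumFree S) (hle : S' ≤ S) : IsZeroSumFree S' :=
  fun T hT => h T (hT.trans hle)

lemma zero_notMem_subsums {S : Multiset G} (h : IsZeroSumFree S) : 0 ∉ subsums S :=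
  fun ⟨T, hT, hT0, hsum⟩ => h T hT hT0 hsum

lemma sum_cons_notMem_subsums {S : Multiset G} {a : G} (h : IsZeroSumFree (a ::ₘ S)) :
    (a ::ₘ S).sum ∉ subsums S := by
  rintro ⟨T, hT, -, hsum⟩
  obtain ⟨R, hR⟩ := Multiset.le_iff_exists_add.mp (hT.trans (Multiset.le_cons_self S a))
  refine h R (hR ▸ Multiset.le_add_left R T) ?_ ?_
  · rintro rfl
    have := Multiset.card_le_card hT
    rw [← add_zero T, ← hR, Multiset.card_cons] at this
    omega
  · have := congrArg Multiset.sum hR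
    rwa [Multiset.sum_add, hsum, left_eq_add] at this

lemma card_le_ncard_subsums [Finite G] {S : Multiset G} (h : IsZeroSumFree S) :
    Multiset.card S ≤ (subsums S).ncard := by
  induction S using Multiset.induction_on with
  | empty => simp
  | cons a S ih =>
    have hsub : insert (a ::ₘ S).sum (subsums S) ⊆ subsums (a ::ₘ S) := by
      rintro g (rfl | ⟨T, hT, hT0, rfl⟩)
      · exact ⟨a ::ₘ S, le_rfl, Multiset.cons_ne_zero, rfl⟩
      · exact ⟨T, hT.trans (Multiset.le_cons_self S a), hT0, rfl⟩
    calc Multiset.card (a ::ₘ S) = Multiset.card S + 1 := Multiset.card_cons a S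
      _ ≤ (subsums S).ncard + 1 := by gcongr; exact ih (h.mono (Multiset.le_cons_self S a))
      _ = (insert (a ::ₘ S).sum (subsums S)).ncard :=
        (Set.ncard_insert_of_notMem h.sum_cons_notMem_subsums).symm
      _ ≤ (subsums (a ::ₘ S)).ncard := Set.ncard_le_ncard hsub

lemma card_lt_card [Finite G] {S : Multiset G} (h : IsZeroSumFree S) :
    Multiset.card S < Nat.card G :=
  calc Multiset.card S < (subsums S).ncard + 1 := Nat.lt_succ_of_le h.card_le_ncard_subsums
    _ = (insert 0 (subsums S)).ncard := (Set.ncard_insert_of_notMem h.zero_notMem_subsums).symm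
    _ ≤ Nat.card G := Set.ncard_le_card _

end IsZeroSumFree

namespace IsMinZeroSum

lemma isZeroSumFree_erase [DecidableEq G] {U : Multiset G} (hU : IsMinZeroSum U) {u : G}
    (hu : u ∈ U) : IsZeroSumFree (U.erase u) := by
  refine fun T hT hT0 => hU.2.2 T (hT.trans (Multiset.erase_le u U)) hT0 ?_
  rintro rfl
  exact (Multiset.card_erase_lt_of_mem hu).not_ge (Multiset.card_le_card hT)

lemma card_le_card [Finite G] {U : Multiset G} (hU : IsMinZeroSum U) :
    Multiset.card U ≤ Nat.card G := by
  classical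
  obtain ⟨u, hu⟩ := Multiset.exists_mem_of_ne_zero hU.1
  have := (hU.isZeroSumFree_erase hu).card_lt_card
  rw [← Multiset.card_erase_add_one hu]
  omega

lemma card_le_dav [Fintype G] {U : Multiset G} (hU : IsMinZeroSum U) :
    Multiset.card U ≤ Dav G :=
  le_csSup ⟨Nat.card G, by rintro n ⟨S, hS, rfl⟩; exact hS.card_le_card⟩ ⟨U, hU, rfl⟩

lemma cons_cons_erase [DecidableEq G] {U : Multiset G} (hU : IsMinZeroSum U) {u g : G}
    (hu : u ∈ U) (hg : g ∉ AddSubgroup.closure {x | x ∈ U}) :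
    IsMinZeroSum (g ::ₘ (u - g) ::ₘ U.erase u) := by
  set H := AddSubgroup.closure {x | x ∈ U}
  set E := U.erase u
  have hUE : u ::ₘ E = U := Multiset.cons_erase hu
  have huH : u ∈ H := AddSubgroup.subset_closure hu
  have hgH : u - g ∉ H := fun h => hg (by simpa using H.sub_mem huH h)
  have hE : ∀ T ≤ E, T.sum ∈ H := fun T hT =>
    H.multiset_sum_mem T fun x hx => AddSubgroup.subset_closure
      (Multiset.mem_of_le (hT.trans (Multiset.erase_le u U)) hx)
  have hnot : ∀ x ∉ H, ∀ T ≤ E, x + T.sum ≠ 0 := fun x hx T hT h =>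
    hx (eq_neg_of_add_eq_zero_left h ▸ neg_mem (hE T hT))
  have hsumE : u + E.sum = 0 := by rw [← Multiset.sum_cons, hUE, hU.2.1]
  refine ⟨Multiset.cons_ne_zero, ?_, ?_⟩
  · rw [Multiset.sum_cons, Multiset.sum_cons, ← hsumE]
    abel
  intro T hT hT0 hTW hsum
  rcases Multiset.le_or_exists_eq_cons_of_le_cons hT with h₁ | ⟨T₁, h₁, rfl⟩
  · rcases Multiset.le_or_exists_eq_cons_of_le_cons h₁ with h₂ | ⟨T₂, h₂, rfl⟩
    · refine hU.2.2 T (h₂.trans (Multiset.erase_le u U)) hT0 ?_ hsum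
      rintro rfl
      exact (Multiset.card_erase_lt_of_mem hu).not_ge (Multiset.card_le_card h₂)
    · exact hnot _ hgH T₂ h₂ (by rwa [Multiset.sum_cons] at hsum)
  rcases Multiset.le_or_exists_eq_cons_of_le_cons h₁ with h₂ | ⟨T₂, h₂, rfl⟩
  · exact hnot _ hg T₁ h₂ (by rwa [Multiset.sum_cons] at hsum)
  have hTU : u ::ₘ T₂ = U := by
    by_contra hne
    refine hU.2.2 (u ::ₘ T₂) (hUE ▸ Multiset.cons_le_cons u h₂) Multiset.cons_ne_zero hne ?_
    simp only [Multiset.sum_cons] at hsum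
    rw [Multiset.sum_cons, ← hsum]
    abel
  exact hTW (by rw [(Multiset.cons_inj_right u).mp (hTU.trans hUE.symm)])

end IsMinZeroSum

end

theorem stmt_5 {G : Type*} [AddCommGroup G] [Fintype G] (U : Multiset G)
    (hU : IsMinZeroSum U) (hlen : Multiset.card U = Dav G) :
    AddSubgroup.closure {g : G | g ∈ U} = ⊤ := by
  classical
  rw [AddSubgroup.eq_top_iff']
  intro g
  by_contra hg
  obtain ⟨u, hu⟩ := Multiset.exists_mem_of_ne_zero hU.1
  have hlonger := (hU.cons_cons_erase hu hg).card_le_dav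
  simp only [Multiset.card_cons, Multiset.card_erase_add_one hu] at hlonger
  omega
end

section
/- Let G be a finite abelian group and U a minimal zero-sum sequence over G. Let A ⊆ supp(U) be a subset such that (1) for every g ∈ supp(U) \ A there exists h ∈ A with g ∈ ⟨h⟩, and (2) for any two distinct g_1, g_2 ∈ A one has g_1 ∉ ⟨g_2⟩. If supp(U) generates a non-cyclic group, then A is not an independent set. -/
/-! Choose for every `g ∈ supp U` some `φ g ∈ A` with `g ∈ ⟨φ g⟩`, taking `φ a = a` on `A`. If `A` were
a singleton `{a}`, then `a ∈ supp U ⊆ ⟨a⟩` and `supp U` would generate the cyclic group `⟨a⟩`; so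
`A` contains `a ≠ b`. Split `U` into the fibres `U_c = {g ∈ U | φ g = c}`: their sums lie in `⟨c⟩`
and add up to `σ(U) = 0`, so independence of `A` forces `σ(U_a) = 0`, and minimality of `U` gives
`U_a = U`, which is absurd since `b ∈ U` but `φ b = b ≠ a`. -/

open AddSubgroup

theorem Multiset.sum_filter_fiberwise_of_maps_to {α β : Type*} [DecidableEq β] {s : Multiset α}
    {t : Finset β} {f : α → β} (hf : ∀ x ∈ s, f x ∈ t) :
    ∑ b ∈ t, s.filter (f · = b) = s := by
  classical
  ext x
  rw [Multiset.count_sum']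
  simp only [Multiset.count_filter]
  rw [Finset.sum_ite_eq t (f x)]
  by_cases hx : x ∈ s
  · rw [if_pos (hf x hx)]
  · simp [Multiset.count_eq_zero_of_notMem hx]

theorem IsMinZeroSum.eq_of_le_of_sum_eq_zero {G : Type*} [AddCommGroup G] {U T : Multiset G}
    (hU : IsMinZeroSum U) (hle : T ≤ U) (hT : T ≠ 0) (hsum : T.sum = 0) : T = U := by
  by_contra hne
  exact hU.2.2 T hle hT hne hsum

theorem IndepSet.forall_eq_zero_of_sum_eq_zero {G : Type*} [AddCommGroup G] {A : Finset G}
    (hA : IndepSet A) {x : G → G} (hx : ∀ a ∈ A, x a ∈ zmultiples a)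
    (hsum : ∑ a ∈ A, x a = 0) : ∀ a ∈ A, x a = 0 := by
  choose! n hn using fun a ha => mem_zmultiples_iff.mp (hx a ha)
  intro a ha
  rw [← hn a ha]
  exact hA.2 n (by rwa [Finset.sum_congr rfl hn]) a ha

theorem AddSubgroup.closure_eq_zmultiples_of_mem {G : Type*} [AddGroup G] {s : Set G} {a : G}
    (ha : a ∈ s) (hs : s ⊆ zmultiples a) : closure s = zmultiples a :=
  le_antisymm (closure_le _ |>.mpr hs) (zmultiples_le_of_mem (subset_closure ha))

theorem stmt_6_general {G : Type*} [AddCommGroup G] (U : Multiset G)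
    (hU : IsMinZeroSum U) (A : Finset G)
    (hsub : ∀ g ∈ A, g ∈ U)
    (h1 : ∀ g ∈ U, g ∉ A → ∃ h ∈ A, g ∈ AddSubgroup.zmultiples h)
    (hnoncyc : ¬ ∃ h : G, AddSubgroup.closure {g : G | g ∈ U} = AddSubgroup.zmultiples h) :
    ¬ IndepSet A := by
  classical
  intro hind
  have hcover : ∀ g ∈ U, ∃ a ∈ A, g ∈ zmultiples a ∧ (g ∈ A → a = g) := by
    intro g hg
    by_cases hgA : g ∈ A
    · exact ⟨g, hgA, mem_zmultiples g, fun _ => rfl⟩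
    · obtain ⟨a, ha, hga⟩ := h1 g hg hgA
      exact ⟨a, ha, hga, fun h => absurd h hgA⟩
  choose! φ hφA hφmem hφfix using hcover
  obtain ⟨g, hg⟩ := Multiset.exists_mem_of_ne_zero hU.1
  obtain ⟨a, ha, b, hb, hab⟩ : ∃ a ∈ A, ∃ b ∈ A, a ≠ b := by
    by_contra! hA
    refine hnoncyc ⟨φ g, closure_eq_zmultiples_of_mem (hsub _ (hφA g hg)) fun x hx => ?_⟩
    exact hA _ (hφA x hx) _ (hφA g hg) ▸ hφmem x hx
  have hfibre_sum : ∀ c ∈ A, (U.filter (φ · = c)).sum = 0 := by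
    refine hind.forall_eq_zero_of_sum_eq_zero (fun c _ => multiset_sum_mem _ fun x hx => ?_) ?_
    · obtain ⟨hxU, rfl⟩ := Multiset.mem_filter.mp hx
      exact hφmem x hxU
    · rw [← Multiset.sum_sum, Multiset.sum_filter_fiberwise_of_maps_to hφA, hU.2.1]
  have ha_fibre : a ∈ U.filter (φ · = a) :=
    Multiset.mem_filter.mpr ⟨hsub a ha, hφfix a (hsub a ha) ha⟩
  have hfibre_eq : U.filter (φ · = a) = U :=
    hU.eq_of_le_of_sum_eq_zero (Multiset.filter_le _ U)
      (ne_of_mem_of_not_mem' ha_fibre (Multiset.notMem_zero a)) (hfibre_sum a ha)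
  have hb_fibre : b ∈ U.filter (φ · = a) := by
    rw [hfibre_eq]; exact hsub b hb
  exact hab (hφfix b (hsub b hb) hb ▸ (Multiset.mem_filter.mp hb_fibre).2).symm

theorem stmt_6 {G : Type*} [AddCommGroup G] [Fintype G] (U : Multiset G)
    (hU : IsMinZeroSum U) (A : Finset G)
    (hsub : ∀ g ∈ A, g ∈ U)
    (h1 : ∀ g ∈ U, g ∉ A → ∃ h ∈ A, g ∈ AddSubgroup.zmultiples h)
    (h2 : ∀ g₁ ∈ A, ∀ g₂ ∈ A, g₁ ≠ g₂ → g₁ ∉ AddSubgroup.zmultiples g₂)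
    (hnoncyc : ¬ ∃ h : G, AddSubgroup.closure {g : G | g ∈ U} = AddSubgroup.zmultiples h) :
    ¬ IndepSet A :=
  stmt_6_general U hU A hsub h1 hnoncyc
end

section
/- Let G be a finite abelian group, G_0 ⊆ G, and let d = min Δ(G_0) be the minimal distance of the monoid B(G_0) of zero-sum sequences over G_0 (assuming Δ(G_0) ≠ ∅). If V is a minimal zero-sum sequence over G_0 such that −g ∈ G_0 for every g ∈ supp(V), then d divides |V| − 2. -/
/-- The set of factorization lengths of a zero-sum sequence `A` into minimal
zero-sum sequences with all terms in `G₀`. -/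
def LengthsOf {G : Type*} [AddCommGroup G] (G₀ : Set G) (A : Multiset G) : Set ℕ :=
  {k | ∃ fac : Multiset (Multiset G), Multiset.card fac = k ∧
        (∀ V ∈ fac, IsMinZeroSum V ∧ ∀ x ∈ V, x ∈ G₀) ∧ fac.sum = A}

/-- The set of (successive) distances of the monoid of zero-sum sequences over `G₀`. -/
def DeltaSet {G : Type*} [AddCommGroup G] (G₀ : Set G) : Set ℕ :=
  {d | 0 < d ∧ ∃ (A : Multiset G) (k : ℕ), k ∈ LengthsOf G₀ A ∧
        k + d ∈ LengthsOf G₀ A ∧ ∀ j, k < j → j < k + d → j ∉ LengthsOf G₀ A}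

section MinZeroSum

variable {G : Type*} [AddCommGroup G]

theorem IsMinZeroSum.map_addEquiv {H : Type*} [AddCommGroup H] (e : G ≃+ H) {S : Multiset G}
    (hS : IsMinZeroSum S) : IsMinZeroSum (S.map e) := by
  obtain ⟨hS0, hSsum, hSmin⟩ := hS
  refine ⟨by simpa using hS0, by rw [← map_multiset_sum, hSsum, map_zero], ?_⟩
  intro T hT hT0 hTS hTsum
  have hT_eq : (T.map e.symm).map e = T := by simp [Multiset.map_map]
  rw [← hT_eq, Multiset.map_le_map_iff e.injective] at hT
  refine hSmin (T.map e.symm) hT (by simpa using hT0) ?_ ?_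
  · rintro rfl
    exact hTS hT_eq.symm
  · rw [← map_multiset_sum, hTsum, map_zero]

theorem IsMinZeroSum.eq_singleton_zero_of_zero_mem {S : Multiset G} (hS : IsMinZeroSum S)
    (h0 : (0 : G) ∈ S) : S = {0} := by
  by_contra hne
  exact hS.2.2 {0} (Multiset.singleton_le.2 h0) (Multiset.singleton_ne_zero 0) (Ne.symm hne)
    (Multiset.sum_singleton 0)

theorem isMinZeroSum_pair_neg {g : G} (hg : g ≠ 0) : IsMinZeroSum {g, -g} := by
  refine ⟨Multiset.cons_ne_zero, by simp, fun T hT hT0 hTne hTsum => ?_⟩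
  have hcard : Multiset.card T < 2 :=
    lt_of_le_of_ne (by simpa using Multiset.card_le_card hT)
      fun h => hTne (Multiset.eq_of_le_of_card_le hT (by simp [h]))
  obtain ⟨x, rfl⟩ : ∃ x, T = {x} :=
    Multiset.card_eq_one.1 (by have := Multiset.card_pos.2 hT0; omega)
  have hx : x = g ∨ x = -g := by simpa using Multiset.singleton_le.1 hT
  rw [Multiset.sum_singleton] at hTsum
  rcases hx with rfl | rfl
  · exact hg hTsum
  · exact hg (neg_eq_zero.1 hTsum)

end MinZeroSum

section Lengths

variable {G : Type*} [AddCommGroup G] (G₀ : Set G)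

theorem add_mem_lengthsOf_add {A B : Multiset G} {k l : ℕ} (hk : k ∈ LengthsOf G₀ A)
    (hl : l ∈ LengthsOf G₀ B) : k + l ∈ LengthsOf G₀ (A + B) := by
  obtain ⟨fA, rfl, hfA, rfl⟩ := hk
  obtain ⟨fB, rfl, hfB, rfl⟩ := hl
  refine ⟨fA + fB, Multiset.card_add _ _, fun W hW => ?_, Multiset.sum_add _ _⟩
  rcases Multiset.mem_add.1 hW with h | h
  exacts [hfA W h, hfB W h]

theorem mul_mem_lengthsOf_nsmul {B : Multiset G} {l : ℕ} (hl : l ∈ LengthsOf G₀ B) (q : ℕ) :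
    q * l ∈ LengthsOf G₀ (q • B) := by
  induction q with
  | zero => exact ⟨0, by simp, by simp, by simp⟩
  | succ q ih => simpa [succ_nsmul, Nat.succ_mul] using add_mem_lengthsOf_add G₀ ih hl

theorem two_mem_lengthsOf_add_map_neg {V : Multiset G} (hV : IsMinZeroSum V)
    (hVG₀ : ∀ x ∈ V, x ∈ G₀) (hneg : ∀ x ∈ V, -x ∈ G₀) :
    2 ∈ LengthsOf G₀ (V + V.map Neg.neg) := by
  refine ⟨{V, V.map Neg.neg}, rfl, ?_, by simp⟩
  intro W hW
  rw [Multiset.insert_eq_cons, Multiset.mem_cons, Multiset.mem_singleton] at hW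
  rcases hW with rfl | rfl
  · exact ⟨hV, hVG₀⟩
  · refine ⟨by simpa using hV.map_addEquiv (AddEquiv.neg G), ?_⟩
    simpa using hneg

theorem card_mem_lengthsOf_add_map_neg {V : Multiset G} (h0 : (0 : G) ∉ V)
    (hVG₀ : ∀ x ∈ V, x ∈ G₀) (hneg : ∀ x ∈ V, -x ∈ G₀) :
    Multiset.card V ∈ LengthsOf G₀ (V + V.map Neg.neg) := by
  refine ⟨V.map fun g => {g, -g}, Multiset.card_map _ _, ?_, ?_⟩
  · simp only [Multiset.mem_map, forall_exists_index, and_imp, forall_apply_eq_imp_iff₂]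
    intro g hg
    refine ⟨isMinZeroSum_pair_neg (ne_of_mem_of_not_mem hg h0), ?_⟩
    simpa using ⟨hVG₀ g hg, hneg g hg⟩
  · calc (V.map fun g => ({g, -g} : Multiset G)).sum
        = (V.map fun g => {g}).sum + ((V.map Neg.neg).map fun g => {g}).sum := by
          simp only [Multiset.map_map, Function.comp_def, ← Multiset.sum_map_add,
            Multiset.singleton_add, Multiset.insert_eq_cons]
      _ = V + V.map Neg.neg := by rw [Multiset.sum_map_singleton, Multiset.sum_map_singleton]

end Lengths

section Distances

variable {G : Type*} [AddCommGroup G] {G₀ : Set G}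

theorem exists_mem_deltaSet_le_sub {A : Multiset G} {k l : ℕ} (hk : k ∈ LengthsOf G₀ A)
    (hl : l ∈ LengthsOf G₀ A) (hkl : k < l) : ∃ d ∈ DeltaSet G₀, d ≤ l - k := by
  classical
  -- the largest length `k' < l` with `k ≤ k'` is followed by the next length `l`
  let P : ℕ → Prop := fun j => j ∈ LengthsOf G₀ A ∧ k ≤ j
  set k' := Nat.findGreatest P (l - 1)
  have hk' : P k' := Nat.findGreatest_spec (by omega) ⟨hk, le_rfl⟩
  have hk'l : k' < l := by have := Nat.findGreatest_le (P := P) (l - 1); omega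
  refine ⟨l - k', ⟨by omega, A, k', hk'.1, by rwa [Nat.add_sub_cancel' hk'l.le], ?_⟩, by omega⟩
  intro j hk'j hjl hj
  exact Nat.findGreatest_is_greatest hk'j (by omega) ⟨hj, hk'.2.trans hk'j.le⟩

theorem sInf_deltaSet_dvd_sub (hne : (DeltaSet G₀).Nonempty) {A : Multiset G} {k l : ℕ}
    (hk : k ∈ LengthsOf G₀ A) (hl : l ∈ LengthsOf G₀ A) : sInf (DeltaSet G₀) ∣ l - k := by
  obtain ⟨hdpos, B, m, hm, hmd, -⟩ := Nat.sInf_mem hne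
  set d := sInf (DeltaSet G₀)
  rw [Nat.dvd_iff_mod_eq_zero]
  by_contra hr
  set q := (l - k) / d
  have hdiv : d * q + (l - k) % d = l - k := Nat.div_add_mod (l - k) d
  have hrd : (l - k) % d < d := Nat.mod_lt _ hdpos
  have h₁ := add_mem_lengthsOf_add G₀ hk (mul_mem_lengthsOf_nsmul G₀ hmd q)
  have h₂ := add_mem_lengthsOf_add G₀ hl (mul_mem_lengthsOf_nsmul G₀ hm q)
  rw [mul_add, mul_comm q d] at h₁
  obtain ⟨d', hd', hd'le⟩ := exists_mem_deltaSet_le_sub h₁ h₂ (by omega)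
  have := Nat.sInf_le hd'
  omega

end Distances

theorem stmt_7_general {G : Type*} [AddCommGroup G] (G₀ : Set G)
    (hne : (DeltaSet G₀).Nonempty) (V : Multiset G)
    (hV : IsMinZeroSum V) (hVG₀ : ∀ x ∈ V, x ∈ G₀)
    (hneg : ∀ x ∈ V, -x ∈ G₀) :
    sInf (DeltaSet G₀) ∣ Multiset.card V - 2 := by
  by_cases h0 : (0 : G) ∈ V
  · simp [hV.eq_singleton_zero_of_zero_mem h0]
  · exact sInf_deltaSet_dvd_sub hne (two_mem_lengthsOf_add_map_neg G₀ hV hVG₀ hneg)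
      (card_mem_lengthsOf_add_map_neg G₀ h0 hVG₀ hneg)

theorem stmt_7 {G : Type*} [AddCommGroup G] [Fintype G] (G₀ : Set G)
    (hne : (DeltaSet G₀).Nonempty) (V : Multiset G)
    (hV : IsMinZeroSum V) (hVG₀ : ∀ x ∈ V, x ∈ G₀)
    (hneg : ∀ x ∈ V, -x ∈ G₀) :
    sInf (DeltaSet G₀) ∣ Multiset.card V - 2 :=
  stmt_7_general G₀ hne V hV hVG₀ hneg
end

section
/- Let G be a finite abelian group, and let g_1, …, g_t, h ∈ G with (g_1,…,g_t) independent, t ≥ 1, each ord(g_i) ≥ 2, and suppose p·h = k_1 g_1 + ⋯ + k_t g_t where p is the minimal positive integer with p·h ∈ ⟨g_1,…,g_t⟩ and k_i ∈ [1, ord(g_i) − 1]. Then h^p g_1^{ord(g_1) − k_1} ⋯ g_t^{ord(g_t) − k_t} is a minimal zero-sum sequence over G. -/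
/-!
A zero-sum subsequence contains `q ≤ p` copies of `h` and `a i < ord (g i)` copies of each `g i`,
with `q • h + ∑ a i • g i = 0`. If `q = 0`, independence forces every `a i` to vanish. Otherwise
`q • h ∈ ⟨g⟩`, so `q = p` by minimality of `p`; subtracting `p • h = ∑ k i • g i`, independence
makes `ord (g i)` divide `k i + a i ∈ [1, 2 ord (g i))`, hence `a i = ord (g i) - k i` and the
subsequence is the whole sequence.
-/

namespace Multiset

variable {α : Type*}

theorem exists_eq_add_of_le_add {s t u : Multiset α} (h : u ≤ s + t) :
    ∃ v w, v ≤ s ∧ w ≤ t ∧ u = v + w := by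
  classical
  refine ⟨u ∩ s, u - s, inter_le_right, tsub_le_iff_left.mpr h, ?_⟩
  ext x
  have := count_le_of_le x h
  rw [count_add] at this ⊢
  rw [count_inter, count_sub]
  omega

theorem exists_eq_sum_of_le_sum {ι : Type*} {s : Finset ι} {f : ι → Multiset α} {u : Multiset α}
    (h : u ≤ ∑ i ∈ s, f i) : ∃ v : ι → Multiset α, (∀ i, v i ≤ f i) ∧ u = ∑ i ∈ s, v i := by
  classical
  induction s using Finset.induction_on generalizing u with
  | empty => exact ⟨fun _ => 0, fun _ => zero_le _, by simpa using h⟩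
  | @insert j s hj ih =>
    rw [Finset.sum_insert hj] at h
    obtain ⟨w, u', hw, hu', rfl⟩ := exists_eq_add_of_le_add h
    obtain ⟨v, hv, rfl⟩ := ih hu'
    refine ⟨Function.update v j w, fun i => ?_, ?_⟩
    · rcases eq_or_ne i j with rfl | hij
      · simpa using hw
      · simpa [Function.update_of_ne hij] using hv i
    · rw [Finset.sum_insert hj, Function.update_self]
      congr 1
      exact Finset.sum_congr rfl fun i hi => (Function.update_of_ne (ne_of_mem_of_not_mem hi hj) _ _).symm

theorem exists_eq_replicate_add_sum_replicate_of_le {ι : Type*} [Fintype ι] {x : α} {n : ℕ}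
    {y : ι → α} {m : ι → ℕ} {u : Multiset α}
    (h : u ≤ replicate n x + ∑ i, replicate (m i) (y i)) :
    ∃ q ≤ n, ∃ a : ι → ℕ, (∀ i, a i ≤ m i) ∧ u = replicate q x + ∑ i, replicate (a i) (y i) := by
  obtain ⟨v, w, hv, hw, rfl⟩ := exists_eq_add_of_le_add h
  obtain ⟨q, hq, rfl⟩ := le_replicate_iff.mp hv
  obtain ⟨w, hwm, rfl⟩ := exists_eq_sum_of_le_sum hw
  choose a ha hwa using fun i => le_replicate_iff.mp (hwm i)
  exact ⟨q, hq, a, ha, by simp only [hwa]⟩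

theorem sum_replicate_add_sum_replicate {M ι : Type*} [AddCommMonoid M] [Fintype ι] (x : M)
    (n : ℕ) (y : ι → M) (m : ι → ℕ) :
    (replicate n x + ∑ i, replicate (m i) (y i)).sum = n • x + ∑ i, m i • y i := by
  simp only [sum_add, sum_sum, sum_replicate]

end Multiset

section Independent

variable {ι G : Type*} [Fintype ι] [AddCommGroup G] {g : ι → G}

theorem addOrderOf_dvd_of_sum_nsmul_eq_zero
    (hindep : ∀ m : ι → ℤ, ∑ i, m i • g i = 0 → ∀ i, m i • g i = 0) {n : ι → ℕ}
    (hn : ∑ i, n i • g i = 0) (i : ι) : addOrderOf (g i) ∣ n i := by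
  rw [addOrderOf_dvd_iff_nsmul_eq_zero, ← natCast_zsmul]
  exact hindep (fun i => n i) (by simpa only [natCast_zsmul] using hn) i

theorem nsmul_mem_closure_range_of_add_sum_eq_zero {h : G} {q : ℕ} {a : ι → ℕ}
    (hsum : q • h + ∑ i, a i • g i = 0) : q • h ∈ AddSubgroup.closure (Set.range g) := by
  rw [eq_neg_of_add_eq_zero_left hsum]
  exact neg_mem <| sum_mem fun i _ =>
    AddSubgroup.nsmul_mem _ (AddSubgroup.subset_closure (Set.mem_range_self i)) _

end Independent

theorem stmt_18_general {G : Type*} [AddCommGroup G] (t : ℕ)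
    (g : Fin t → G)
    (hindep : ∀ m : Fin t → ℤ, (∑ i, m i • g i) = 0 → ∀ i, m i • g i = 0)
    (h : G) (p : ℕ) (hp : 0 < p)
    (hmin : ∀ q : ℕ, 0 < q → q • h ∈ AddSubgroup.closure (Set.range g) → p ≤ q)
    (k : Fin t → ℕ) (hk : ∀ i, 1 ≤ k i ∧ k i ≤ addOrderOf (g i) - 1)
    (heq : p • h = ∑ i, (k i) • g i) :
    IsMinZeroSum (Multiset.replicate p h +
      ∑ i, Multiset.replicate (addOrderOf (g i) - k i) (g i)) := by
  have hk_add : ∀ i, k i + (addOrderOf (g i) - k i) = addOrderOf (g i) := fun i => by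
    have := hk i; omega
  refine ⟨?_, ?_, fun T hTS hT0 hTne hTsum => ?_⟩
  · intro h0
    simpa [hp.ne'] using congrArg Multiset.card h0
  · rw [Multiset.sum_replicate_add_sum_replicate, heq, ← Finset.sum_add_distrib]
    exact Finset.sum_eq_zero fun i _ => by rw [← add_nsmul, hk_add, addOrderOf_nsmul_eq_zero]
  obtain ⟨q, hq, a, ha, rfl⟩ := Multiset.exists_eq_replicate_add_sum_replicate_of_le hTS
  rw [Multiset.sum_replicate_add_sum_replicate] at hTsum
  rcases q.eq_zero_or_pos with rfl | hq0
  · rw [zero_nsmul, zero_add] at hTsum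
    have ha0 : ∀ i, a i = 0 := fun i => Nat.eq_zero_of_dvd_of_lt
      (addOrderOf_dvd_of_sum_nsmul_eq_zero hindep hTsum i) (by have := ha i; have := hk i; omega)
    exact hT0 (by simp [ha0])
  obtain rfl : q = p :=
    le_antisymm hq (hmin q hq0 (nsmul_mem_closure_range_of_add_sum_eq_zero hTsum))
  have hka : ∑ i, (k i + a i) • g i = 0 := by
    simpa only [add_nsmul, Finset.sum_add_distrib, ← heq] using hTsum
  have ha_full : ∀ i, a i = addOrderOf (g i) - k i := fun i => by
    have := Nat.eq_of_dvd_of_lt_two_mul (by have := hk i; omega)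
      (addOrderOf_dvd_of_sum_nsmul_eq_zero hindep hka i) (by have := ha i; have := hk i; omega)
    omega
  exact hTne (by simp only [ha_full])

theorem stmt_18 {G : Type*} [AddCommGroup G] [Fintype G] (t : ℕ) (ht : 1 ≤ t)
    (g : Fin t → G) (hne : ∀ i, g i ≠ 0)
    (hindep : ∀ m : Fin t → ℤ, (∑ i, m i • g i) = 0 → ∀ i, m i • g i = 0)
    (hord : ∀ i, 2 ≤ addOrderOf (g i))
    (h : G) (p : ℕ) (hp : 0 < p)
    (hmem : p • h ∈ AddSubgroup.closure (Set.range g))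
    (hmin : ∀ q : ℕ, 0 < q → q • h ∈ AddSubgroup.closure (Set.range g) → p ≤ q)
    (k : Fin t → ℕ) (hk : ∀ i, 1 ≤ k i ∧ k i ≤ addOrderOf (g i) - 1)
    (heq : p • h = ∑ i, (k i) • g i) :
    IsMinZeroSum (Multiset.replicate p h +
      ∑ i, Multiset.replicate (addOrderOf (g i) - k i) (g i)) :=
  stmt_18_general t g hindep h p hp hmin k hk heq
end
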